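/- Let M be a perfect matching on a set P of n points in the plane in convex position (and in general position), and let M' be a perfect matching obtained from M by a single flip. Then the number of crossing pairs of edges of M' is strictly smaller than the number of crossing pairs of edges of M. -/

import Mathlib

open EuclideanGeometry Real

noncomputable section

/-- Points of the Euclidean plane. -/
abbrev Pt : Type := EuclideanSpace ℝ (Fin 2)

/-- Two closed segments `ab` and `cd` on four distinct points *cross* if their open
segments have a common point. -/
def SegCross (a b c d : Pt) : Prop :=
  a ≠ b ∧ a ≠ c ∧ a ≠ d ∧ b ≠ c ∧ b ≠ d ∧ c ≠ d ∧
    (openSegment ℝ a b ∩ openSegment ℝ c d).Nonempty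

/-- `M` is a perfect matching on the point set `P`: a set of non-degenerate unordered
pairs (edges) of points of `P` such that every point of `P` lies in exactly one edge. -/
def IsPM (P : Finset Pt) (M : Set (Sym2 Pt)) : Prop :=
  (∀ e ∈ M, ¬ e.IsDiag) ∧
  (∀ e ∈ M, ∀ p ∈ e, p ∈ P) ∧
  (∀ p ∈ P, ∃! e, e ∈ M ∧ p ∈ e)

/-- Two unordered edges cross. -/
def EdgeCross (e f : Sym2 Pt) : Prop :=
  ∃ a b c d : Pt, e = s(a, b) ∧ f = s(c, d) ∧ SegCross a b c d

/-- A matching is plane if no two of its edges cross. -/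
def PlaneM (M : Set (Sym2 Pt)) : Prop :=
  ∀ e ∈ M, ∀ f ∈ M, ¬ EdgeCross e f

/-- `M'` is obtained from `M` by a single flip: two crossing edges `{a,b}`, `{c,d}`
are replaced by `{a,c}`, `{b,d}` or by `{a,d}`, `{b,c}`. -/
def Flip (M M' : Set (Sym2 Pt)) : Prop :=
  ∃ a b c d : Pt, s(a, b) ∈ M ∧ s(c, d) ∈ M ∧ SegCross a b c d ∧
    (M' = (M \ {s(a, b), s(c, d)}) ∪ {s(a, c), s(b, d)} ∨
     M' = (M \ {s(a, b), s(c, d)}) ∪ {s(a, d), s(b, c)})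

/-- `M` can be transformed into a plane matching by at most `k` flips. -/
def FlipsToPlane (M : Set (Sym2 Pt)) (k : ℕ) : Prop :=
  ∃ (j : ℕ) (g : ℕ → Set (Sym2 Pt)), j ≤ k ∧ g 0 = M ∧
    (∀ i < j, Flip (g i) (g (i + 1))) ∧ PlaneM (g j)

/-- No three distinct points of `P` are collinear. -/
def GenPos (P : Set Pt) : Prop :=
  ∀ p ∈ P, ∀ q ∈ P, ∀ r ∈ P, p ≠ q → p ≠ r → q ≠ r →
    ¬ Collinear ℝ ({p, q, r} : Set Pt)

/-- `P` is in convex position: no point lies in the convex hull of the others. -/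
def ConvexPos (P : Set Pt) : Prop :=
  ∀ p ∈ P, p ∉ convexHull ℝ (P \ {p})

/-- The number of (unordered) crossing pairs of edges of `M`. -/
def crossNum (M : Set (Sym2 Pt)) : ℕ :=
  Set.ncard {z : Sym2 (Sym2 Pt) | ∃ e f, z = s(e, f) ∧ e ∈ M ∧ f ∈ M ∧ EdgeCross e f}


/-- signed area determinant -/
def dt (p q r : Pt) : ℝ :=
  (q 0 - p 0) * (r 1 - p 1) - (q 1 - p 1) * (r 0 - p 0)

lemma dt_self_left (p q : Pt) : dt p q p = 0 := by simp [dt]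

lemma dt_self_right (p q : Pt) : dt p q q = 0 := by simp [dt]; ring

lemma dt_affine2 (p q : Pt) (s t : ℝ) (u v : Pt) (h : s + t = 1) :
    dt p q (s • u + t • v) = s * dt p q u + t * dt p q v := by
  have ht : t = 1 - s := by linarith
  subst ht
  simp only [dt, PiLp.add_apply, PiLp.smul_apply, smul_eq_mul]
  ring

lemma dt_affine3 (p q : Pt) (s t r : ℝ) (u v w : Pt) (h : s + t + r = 1) :
    dt p q (s • u + t • v + r • w) = s * dt p q u + t * dt p q v + r * dt p q w := by
  have hr : r = 1 - s - t := by linarith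
  subst hr
  simp only [dt, PiLp.add_apply, PiLp.smul_apply, smul_eq_mul]
  ring

lemma pt_ext {u v : Pt} (h0 : u 0 = v 0) (h1 : u 1 = v 1) : u = v := by
  ext i; fin_cases i <;> assumption

/-- if dt p q r = 0 and p ≠ q then r is on line pq -/
lemma exists_param_of_dt_eq_zero {p q r : Pt} (hpq : p ≠ q) (h : dt p q r = 0) :
    ∃ t : ℝ, r = (1 - t) • p + t • q := by
  simp only [dt] at h
  have hne : q 0 - p 0 ≠ 0 ∨ q 1 - p 1 ≠ 0 := by
    by_contra hc
    push_neg at hc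
    exact hpq (pt_ext (by linarith [hc.1]) (by linarith [hc.2])).symm
  rcases hne with h0 | h0
  · refine ⟨(r 0 - p 0) / (q 0 - p 0), ?_⟩
    apply pt_ext <;>
      simp only [PiLp.add_apply, PiLp.smul_apply, smul_eq_mul] <;>
      field_simp <;> first | ring1 | linear_combination h | linear_combination -h | linear_combination 2*h | linear_combination -2*h | linear_combination 3*h | linear_combination -3*h
  · refine ⟨(r 1 - p 1) / (q 1 - p 1), ?_⟩
    apply pt_ext <;>
      simp only [PiLp.add_apply, PiLp.smul_apply, smul_eq_mul] <;>
      field_simp <;> first | ring1 | linear_combination h | linear_combination -h | linear_combination 2*h | linear_combination -2*h | linear_combination 3*h | linear_combination -3*h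

lemma collinear_of_param {p q r : Pt} (t : ℝ) (h : r = (1 - t) • p + t • q) :
    Collinear ℝ ({p, q, r} : Set Pt) := by
  rw [collinear_iff_exists_forall_eq_smul_vadd]
  refine ⟨p, q - p, fun x hx => ?_⟩
  rcases hx with hx | hx | hx
  · exact ⟨0, by simp [hx]⟩
  · refine ⟨1, by simp [hx]⟩
  · refine ⟨t, ?_⟩
    simp only [Set.mem_singleton_iff] at hx
    subst hx h
    rw [vadd_eq_add]
    module

lemma collinear_of_dt_eq_zero {p q r : Pt} (h : dt p q r = 0) :
    Collinear ℝ ({p, q, r} : Set Pt) := by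
  by_cases hpq : p = q
  · subst hpq
    have : ({p, p, r} : Set Pt) = {p, r} := by ext w; simp [or_comm]
    rw [this]
    exact collinear_pair ℝ p r
  · obtain ⟨t, ht⟩ := exists_param_of_dt_eq_zero hpq h
    exact collinear_of_param t ht
lemma mul_neg_of_combo {x y t : ℝ} (h : (1 - t) * x + t * y = 0) (h0 : 0 < t)
    (h1 : t < 1) (hx : x ≠ 0) : x * y < 0 := by
  have hx2 : 0 < x * x := mul_self_pos.2 hx
  have h3 : t * (x * y) = (t - 1) * (x * x) := by linear_combination x * h
  have h4 : (t - 1) * (x * x) < 0 := mul_neg_of_neg_of_pos (by linarith) hx2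
  by_contra hcon
  push_neg at hcon
  nlinarith [mul_nonneg h0.le hcon]

lemma eq_of_dt_eq {a b c d u v : Pt} (h1 : dt a b u = dt a b v) (h2 : dt c d u = dt c d v)
    (h3 : dt a b d - dt a b c ≠ 0) : u = v := by
  have e1 : (b 0 - a 0) * (u 1 - v 1) - (b 1 - a 1) * (u 0 - v 0) = 0 := by
    simp only [dt] at h1; linear_combination h1
  have e2 : (d 0 - c 0) * (u 1 - v 1) - (d 1 - c 1) * (u 0 - v 0) = 0 := by
    simp only [dt] at h2; linear_combination h2
  have hk : (b 0 - a 0) * (d 1 - c 1) - (b 1 - a 1) * (d 0 - c 0) ≠ 0 := by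
    intro h; apply h3; simp only [dt]; linear_combination h
  have hα : (u 1 - v 1) * ((b 0 - a 0) * (d 1 - c 1) - (b 1 - a 1) * (d 0 - c 0)) = 0 := by
    linear_combination (d 1 - c 1) * e1 - (b 1 - a 1) * e2
  have hβ : (u 0 - v 0) * ((b 0 - a 0) * (d 1 - c 1) - (b 1 - a 1) * (d 0 - c 0)) = 0 := by
    linear_combination (d 0 - c 0) * e1 - (b 0 - a 0) * e2
  have h1' := (mul_eq_zero.1 hα).resolve_right hk
  have h2' := (mul_eq_zero.1 hβ).resolve_right hk
  exact pt_ext (by linarith) (by linarith)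

set_option maxHeartbeats 1000000 in
/-- The affine coordinate system adapted to a crossing pair of segments. -/
lemma exists_coords {a b c d : Pt} (hX : SegCross a b c d)
    (nabc : ¬ Collinear ℝ ({a, b, c} : Set Pt)) (nabd : ¬ Collinear ℝ ({a, b, d} : Set Pt))
    (ncda : ¬ Collinear ℝ ({c, d, a} : Set Pt)) (ncdb : ¬ Collinear ℝ ({c, d, b} : Set Pt)) :
    ∃ (φ ψ : Pt → ℝ) (e₀ : Pt),
      (∀ s t : ℝ, ∀ u v : Pt, s + t = 1 → φ (s • u + t • v) = s * φ u + t * φ v) ∧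
      (∀ s t : ℝ, ∀ u v : Pt, s + t = 1 → ψ (s • u + t • v) = s * ψ u + t * ψ v) ∧
      (∀ s t r : ℝ, ∀ u v w : Pt, s + t + r = 1 →
        φ (s • u + t • v + r • w) = s * φ u + t * φ v + r * φ w) ∧
      (∀ s t r : ℝ, ∀ u v w : Pt, s + t + r = 1 →
        ψ (s • u + t • v + r • w) = s * ψ u + t * ψ v + r * ψ w) ∧
      (φ a = 0 ∧ φ b = 0 ∧ φ c = 1 ∧ φ d < 0) ∧
      (ψ c = 0 ∧ ψ d = 0 ∧ ψ a = 1 ∧ ψ b < 0) ∧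
      (∀ u v : Pt, φ u = φ v → ψ u = ψ v → u = v) ∧
      (e₀ ∈ openSegment ℝ a b ∧ φ e₀ = 0 ∧ ψ e₀ = 0) ∧
      (∀ w : Pt, φ w + ψ w = 1 → Collinear ℝ ({a, c, w} : Set Pt)) ∧
      (∀ w : Pt, φ w = 0 → ψ b < ψ w → ψ w < 1 → w ∈ openSegment ℝ a b) ∧
      (∀ w : Pt, ψ w = 0 → φ d < φ w → φ w < 1 → w ∈ openSegment ℝ c d) ∧
      (∀ w ∈ openSegment ℝ a c, φ w + ψ w = 1 ∧ 0 < φ w ∧ φ w < 1) ∧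
      (∀ w ∈ openSegment ℝ b d, (φ d < φ w ∧ φ w < 0) ∧ (ψ b < ψ w ∧ ψ w < 0)) := by
  obtain ⟨hab, hac, had, hbc, hbd, hcd, ⟨e₀, he1, he2⟩⟩ := hX
  have he1' := he1
  rw [openSegment_eq_image] at he1' he2
  obtain ⟨s, ⟨hs0, hs1⟩, hes⟩ := he1'
  obtain ⟨t, ⟨ht0, ht1⟩, het⟩ := he2
  have hes' : (1 - s) • a + s • b = e₀ := hes
  have het' : (1 - t) • c + t • d = e₀ := het
  have fa : dt a b a = 0 := dt_self_left a b
  have fb : dt a b b = 0 := dt_self_right a b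
  have gc : dt c d c = 0 := dt_self_left c d
  have gd : dt c d d = 0 := dt_self_right c d
  have fc0 : dt a b c ≠ 0 := fun h => nabc (collinear_of_dt_eq_zero h)
  have fd0 : dt a b d ≠ 0 := fun h => nabd (collinear_of_dt_eq_zero h)
  have ga0 : dt c d a ≠ 0 := fun h => ncda (collinear_of_dt_eq_zero h)
  have gb0 : dt c d b ≠ 0 := fun h => ncdb (collinear_of_dt_eq_zero h)
  have hfe : dt a b e₀ = 0 := by
    rw [← hes', dt_affine2 a b (1 - s) s a b (by ring), fa, fb]; ring
  have hge : dt c d e₀ = 0 := by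
    rw [← het', dt_affine2 c d (1 - t) t c d (by ring), gc, gd]; ring
  have hfcd : (1 - t) * dt a b c + t * dt a b d = 0 := by
    rw [← dt_affine2 a b (1 - t) t c d (by ring), het', hfe]
  have hgab : (1 - s) * dt c d a + s * dt c d b = 0 := by
    rw [← dt_affine2 c d (1 - s) s a b (by ring), hes', hge]
  have fcfd : dt a b c * dt a b d < 0 := mul_neg_of_combo hfcd ht0 ht1 fc0
  have gagb : dt c d a * dt c d b < 0 := mul_neg_of_combo hgab hs0 hs1 ga0
  set φ : Pt → ℝ := fun r => dt a b r / dt a b c with hφdef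
  set ψ : Pt → ℝ := fun r => dt c d r / dt c d a with hψdef
  have φaff : ∀ s' t' : ℝ, ∀ u v : Pt, s' + t' = 1 → φ (s' • u + t' • v) = s' * φ u + t' * φ v := by
    intro s' t' u v h; simp only [hφdef]; rw [dt_affine2 a b s' t' u v h]; ring
  have ψaff : ∀ s' t' : ℝ, ∀ u v : Pt, s' + t' = 1 → ψ (s' • u + t' • v) = s' * ψ u + t' * ψ v := by
    intro s' t' u v h; simp only [hψdef]; rw [dt_affine2 c d s' t' u v h]; ring
  have φaff3 : ∀ s' t' r' : ℝ, ∀ u v w : Pt, s' + t' + r' = 1 →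
      φ (s' • u + t' • v + r' • w) = s' * φ u + t' * φ v + r' * φ w := by
    intro s' t' r' u v w h; simp only [hφdef]; rw [dt_affine3 a b s' t' r' u v w h]; ring
  have ψaff3 : ∀ s' t' r' : ℝ, ∀ u v w : Pt, s' + t' + r' = 1 →
      ψ (s' • u + t' • v + r' • w) = s' * ψ u + t' * ψ v + r' * ψ w := by
    intro s' t' r' u v w h; simp only [hψdef]; rw [dt_affine3 c d s' t' r' u v w h]; ring
  have φa : φ a = 0 := by simp [hφdef, fa]
  have φb : φ b = 0 := by simp [hφdef, fb]
  have φc : φ c = 1 := div_self fc0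
  have φd : φ d < 0 := by
    rcases mul_neg_iff.1 fcfd with ⟨h1, h2⟩ | ⟨h1, h2⟩
    · exact div_neg_of_neg_of_pos h2 h1
    · exact div_neg_of_pos_of_neg h2 h1
  have ψc : ψ c = 0 := by simp [hψdef, gc]
  have ψd : ψ d = 0 := by simp [hψdef, gd]
  have ψa : ψ a = 1 := div_self ga0
  have ψb : ψ b < 0 := by
    rcases mul_neg_iff.1 gagb with ⟨h1, h2⟩ | ⟨h1, h2⟩
    · exact div_neg_of_neg_of_pos h2 h1
    · exact div_neg_of_pos_of_neg h2 h1
  have keyInj : ∀ u v : Pt, φ u = φ v → ψ u = ψ v → u = v := by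
    intro u v h1 h2
    simp only [hφdef] at h1
    simp only [hψdef] at h2
    field_simp at h1 h2
    refine eq_of_dt_eq h1 h2 ?_
    intro h
    have heq : dt a b d = dt a b c := by linarith
    rw [heq] at fcfd
    nlinarith [mul_self_nonneg (dt a b c)]
  have φe : φ e₀ = 0 := by simp [hφdef, hfe]
  have ψe : ψ e₀ = 0 := by simp [hψdef, hge]
  have memAB : ∀ w : Pt, φ w = 0 → ψ b < ψ w → ψ w < 1 → w ∈ openSegment ℝ a b := by
    intro w h0 hlo hhi
    have hf : dt a b w = 0 := by
      simp only [hφdef] at h0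
      exact (div_eq_zero_iff.1 h0).resolve_right fc0
    obtain ⟨τ, hτ⟩ := exists_param_of_dt_eq_zero hab hf
    have hψτ : ψ w = (1 - τ) * 1 + τ * ψ b := by
      rw [hτ, ψaff (1 - τ) τ a b (by ring), ψa]
    have hτ0 : 0 < τ := by nlinarith
    have hτ1 : τ < 1 := by nlinarith
    rw [openSegment_eq_image]
    exact ⟨τ, ⟨hτ0, hτ1⟩, hτ.symm⟩
  have memCD : ∀ w : Pt, ψ w = 0 → φ d < φ w → φ w < 1 → w ∈ openSegment ℝ c d := by
    intro w h0 hlo hhi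
    have hg : dt c d w = 0 := by
      simp only [hψdef] at h0
      exact (div_eq_zero_iff.1 h0).resolve_right ga0
    obtain ⟨τ, hτ⟩ := exists_param_of_dt_eq_zero hcd hg
    have hφτ : φ w = (1 - τ) * 1 + τ * φ d := by
      rw [hτ, φaff (1 - τ) τ c d (by ring), φc]
    have hτ0 : 0 < τ := by nlinarith
    have hτ1 : τ < 1 := by nlinarith
    rw [openSegment_eq_image]
    exact ⟨τ, ⟨hτ0, hτ1⟩, hτ.symm⟩
  have hchi : ∀ w : Pt, φ w + ψ w = 1 → Collinear ℝ ({a, c, w} : Set Pt) := by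
    intro w hw
    have hw' : w = (1 - φ w) • a + (φ w) • c := by
      apply keyInj
      · rw [φaff (1 - φ w) (φ w) a c (by ring), φa, φc]; ring
      · rw [ψaff (1 - φ w) (φ w) a c (by ring), ψa, ψc]; linarith
    exact collinear_of_param (φ w) hw'
  have elimAC : ∀ w ∈ openSegment ℝ a c, φ w + ψ w = 1 ∧ 0 < φ w ∧ φ w < 1 := by
    intro w hw
    rw [openSegment_eq_image] at hw
    obtain ⟨θ, ⟨hθ0, hθ1⟩, hwθ⟩ := hw
    have h1 : φ w = θ := by
      rw [← hwθ, φaff (1 - θ) θ a c (by ring), φa, φc]; ring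
    have h2 : ψ w = 1 - θ := by
      rw [← hwθ, ψaff (1 - θ) θ a c (by ring), ψa, ψc]; ring
    refine ⟨by linarith, by linarith, by linarith⟩
  have elimBD : ∀ w ∈ openSegment ℝ b d, (φ d < φ w ∧ φ w < 0) ∧ (ψ b < ψ w ∧ ψ w < 0) := by
    intro w hw
    rw [openSegment_eq_image] at hw
    obtain ⟨θ, ⟨hθ0, hθ1⟩, hwθ⟩ := hw
    have h1 : φ w = θ * φ d := by
      rw [← hwθ, φaff (1 - θ) θ b d (by ring), φb]; ring
    have h2 : ψ w = (1 - θ) * ψ b := by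
      rw [← hwθ, ψaff (1 - θ) θ b d (by ring), ψd]; ring
    constructor
    · constructor <;> nlinarith
    · constructor <;> nlinarith
  exact ⟨φ, ψ, e₀, φaff, ψaff, φaff3, ψaff3, ⟨φa, φb, φc, φd⟩, ⟨ψc, ψd, ψa, ψb⟩, keyInj,
    ⟨he1, φe, ψe⟩, hchi, memAB, memCD, elimAC, elimBD⟩
lemma openSeg_comm (u v : Pt) : openSegment ℝ u v = openSegment ℝ v u :=
  openSegment_symm ℝ u v

lemma SegCross.swapL {a b c d : Pt} (h : SegCross a b c d) : SegCross b a c d := by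
  obtain ⟨h1, h2, h3, h4, h5, h6, h7⟩ := h
  exact ⟨h1.symm, h4, h5, h2, h3, h6, by rwa [openSeg_comm]⟩

lemma SegCross.swapR {a b c d : Pt} (h : SegCross a b c d) : SegCross a b d c := by
  obtain ⟨h1, h2, h3, h4, h5, h6, h7⟩ := h
  exact ⟨h1, h3, h2, h5, h4, h6.symm, by rwa [openSeg_comm d c]⟩

lemma SegCross.comm {a b c d : Pt} (h : SegCross a b c d) : SegCross c d a b := by
  obtain ⟨h1, h2, h3, h4, h5, h6, h7⟩ := h
  exact ⟨h6, h2.symm, h4.symm, h3.symm, h5.symm, h1, by rwa [Set.inter_comm]⟩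

lemma edgeCross_iff {x y p q : Pt} : EdgeCross s(x, y) s(p, q) ↔ SegCross x y p q := by
  constructor
  · rintro ⟨a, b, c, d, h1, h2, h⟩
    rcases Sym2.eq_iff.1 h1 with ⟨rfl, rfl⟩ | ⟨rfl, rfl⟩ <;>
      rcases Sym2.eq_iff.1 h2 with ⟨rfl, rfl⟩ | ⟨rfl, rfl⟩
    · exact h
    · exact h.swapR
    · exact h.swapL
    · exact h.swapL.swapR
  · intro h
    exact ⟨x, y, p, q, rfl, rfl, h⟩

lemma not_edgeCross_self (e : Sym2 Pt) : ¬ EdgeCross e e := by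
  rintro ⟨a, b, c, d, h1, h2, h⟩
  obtain ⟨hab, hac, had, hbc, hbd, hcd, -⟩ := h
  rw [h1] at h2
  rcases Sym2.eq_iff.1 h2 with ⟨h3, h4⟩ | ⟨h3, h4⟩
  · exact hac h3
  · exact had h3

section Key

variable {a b c d x y : Pt}

/-- Opposite sides of the crossing quadrilateral do not cross. -/
lemma L1 (hX : SegCross a b c d)
    (nabc : ¬ Collinear ℝ ({a, b, c} : Set Pt)) (nabd : ¬ Collinear ℝ ({a, b, d} : Set Pt))
    (ncda : ¬ Collinear ℝ ({c, d, a} : Set Pt)) (ncdb : ¬ Collinear ℝ ({c, d, b} : Set Pt)) :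
    ¬ SegCross a c b d := by
  intro h
  obtain ⟨φ, ψ, e₀, φaff, ψaff, φaff3, ψaff3, ⟨φa, φb, φc, φd⟩, ⟨ψc, ψd, ψa, ψb⟩, keyInj,
    he₀, hchi, memAB, memCD, elimAC, elimBD⟩ := exists_coords hX nabc nabd ncda ncdb
  obtain ⟨-, -, -, -, -, -, ⟨z, hzac, hzbd⟩⟩ := h
  obtain ⟨-, hz1, -⟩ := elimAC z hzac
  obtain ⟨⟨-, hz2⟩, -⟩ := elimBD z hzbd
  linarith

/-- A segment crossing both "new" sides crosses both diagonals. -/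
lemma K1 (hX : SegCross a b c d)
    (nabc : ¬ Collinear ℝ ({a, b, c} : Set Pt)) (nabd : ¬ Collinear ℝ ({a, b, d} : Set Pt))
    (ncda : ¬ Collinear ℝ ({c, d, a} : Set Pt)) (ncdb : ¬ Collinear ℝ ({c, d, b} : Set Pt))
    (h1 : SegCross x y a c) (h2 : SegCross x y b d) :
    SegCross x y a b ∧ SegCross x y c d := by
  obtain ⟨φ, ψ, e₀, φaff, ψaff, φaff3, ψaff3, ⟨φa, φb, φc, φd⟩, ⟨ψc, ψd, ψa, ψb⟩, keyInj,
    he₀, hchi, memAB, memCD, elimAC, elimBD⟩ := exists_coords hX nabc nabd ncda ncdb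
  obtain ⟨hab, hac, had, hbc, hbd, hcd, -⟩ := hX
  obtain ⟨hxy, hxa, hxc, hya, hyc, -, ⟨p, hpxy, hpac⟩⟩ := h1
  obtain ⟨-, hxb, hxd, hyb, hyd, -, ⟨q, hqxy, hqbd⟩⟩ := h2
  obtain ⟨hχp, hφp0, hφp1⟩ := elimAC p hpac
  obtain ⟨⟨hφqd, hφq0⟩, hψqb, hψq0⟩ := elimBD q hqbd
  have hψp0 : 0 < ψ p := by linarith
  have hψp1 : ψ p < 1 := by linarith
  constructor
  · -- crossing with ab
    have hden : 0 < φ p - φ q := by linarith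
    set τ := φ p / (φ p - φ q) with hτdef
    have hτ0 : 0 < τ := div_pos hφp0 hden
    have hτ1 : τ < 1 := (div_lt_one hden).2 (by linarith)
    have hτeq : τ * (φ p - φ q) = φ p := by rw [hτdef]; exact div_mul_cancel₀ _ hden.ne'
    have hφw : φ ((1 - τ) • p + τ • q) = 0 := by
      rw [φaff (1 - τ) τ p q (by ring)]; linear_combination -hτeq
    have hψw : ψ ((1 - τ) • p + τ • q) = (1 - τ) * ψ p + τ * ψ q :=
      ψaff (1 - τ) τ p q (by ring)
    have hlo : ψ b < ψ ((1 - τ) • p + τ • q) := by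
      rw [hψw]
      nlinarith [mul_pos (by linarith : (0:ℝ) < 1 - τ) (by linarith : (0:ℝ) < ψ p - ψ b),
        mul_nonneg hτ0.le (by linarith : (0:ℝ) ≤ ψ q - ψ b)]
    have hhi : ψ ((1 - τ) • p + τ • q) < 1 := by
      rw [hψw]
      nlinarith [mul_nonneg (by linarith : (0:ℝ) ≤ 1 - τ) (by linarith : (0:ℝ) ≤ 1 - ψ p),
        mul_nonneg hτ0.le (by linarith : (0:ℝ) ≤ -ψ q)]
    have hwab := memAB _ hφw hlo hhi
    have hwxy : (1 - τ) • p + τ • q ∈ openSegment ℝ x y :=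
      (convex_openSegment x y) hpxy hqxy (by linarith) hτ0.le (by ring)
    exact ⟨hxy, hxa, hxb, hya, hyb, hab, ⟨_, hwxy, hwab⟩⟩
  · -- crossing with cd
    have hden : 0 < ψ p - ψ q := by linarith
    set σ := ψ p / (ψ p - ψ q) with hσdef
    have hσ0 : 0 < σ := div_pos hψp0 hden
    have hσ1 : σ < 1 := (div_lt_one hden).2 (by linarith)
    have hσeq : σ * (ψ p - ψ q) = ψ p := by rw [hσdef]; exact div_mul_cancel₀ _ hden.ne'
    have hψw : ψ ((1 - σ) • p + σ • q) = 0 := by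
      rw [ψaff (1 - σ) σ p q (by ring)]; linear_combination -hσeq
    have hφw : φ ((1 - σ) • p + σ • q) = (1 - σ) * φ p + σ * φ q :=
      φaff (1 - σ) σ p q (by ring)
    have hlo : φ d < φ ((1 - σ) • p + σ • q) := by
      rw [hφw]
      nlinarith [mul_pos (by linarith : (0:ℝ) < 1 - σ) (by linarith : (0:ℝ) < φ p - φ d),
        mul_nonneg hσ0.le (by linarith : (0:ℝ) ≤ φ q - φ d)]
    have hhi : φ ((1 - σ) • p + σ • q) < 1 := by
      rw [hφw]
      nlinarith [mul_nonneg (by linarith : (0:ℝ) ≤ 1 - σ) (by linarith : (0:ℝ) ≤ 1 - φ p),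
        mul_nonneg hσ0.le (by linarith : (0:ℝ) ≤ -φ q)]
    have hwcd := memCD _ hψw hlo hhi
    have hwxy : (1 - σ) • p + σ • q ∈ openSegment ℝ x y :=
      (convex_openSegment x y) hpxy hqxy (by linarith) hσ0.le (by ring)
    exact ⟨hxy, hxc, hxd, hyc, hyd, hcd, ⟨_, hwxy, hwcd⟩⟩

end Key
section Key2

variable {a b c d x y : Pt}

set_option maxHeartbeats 2000000 in
/-- A segment with endpoints outside the hull crossing a side crosses some diagonal. -/
lemma K2 (hX : SegCross a b c d)
    (nabc : ¬ Collinear ℝ ({a, b, c} : Set Pt)) (nabd : ¬ Collinear ℝ ({a, b, d} : Set Pt))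
    (ncda : ¬ Collinear ℝ ({c, d, a} : Set Pt)) (ncdb : ¬ Collinear ℝ ({c, d, b} : Set Pt))
    (nacx : ¬ Collinear ℝ ({a, c, x} : Set Pt)) (nacy : ¬ Collinear ℝ ({a, c, y} : Set Pt))
    (hxhull : x ∉ convexHull ℝ ({a, b, c, d} : Set Pt))
    (hyhull : y ∉ convexHull ℝ ({a, b, c, d} : Set Pt))
    (hxb : x ≠ b) (hxd : x ≠ d) (hyb : y ≠ b) (hyd : y ≠ d)
    (h1 : SegCross x y a c) :
    SegCross x y a b ∨ SegCross x y c d := by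
  by_contra hcon
  push_neg at hcon
  obtain ⟨hnab, hncd⟩ := hcon
  obtain ⟨φ, ψ, e₀, φaff, ψaff, φaff3, ψaff3, ⟨φa, φb, φc, φd⟩, ⟨ψc, ψd, ψa, ψb⟩, keyInj,
    ⟨he₀ab, φe, ψe⟩, hchi, memAB, memCD, elimAC, elimBD⟩ :=
      exists_coords hX nabc nabd ncda ncdb
  obtain ⟨hab, hac, had, hbc, hbd, hcd, -⟩ := hX
  obtain ⟨hxy, hxa, hxc, hya, hyc, -, ⟨p, hpxy, hpac⟩⟩ := h1
  obtain ⟨hχp, hφp0, hφp1⟩ := elimAC p hpac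
  have hψp0 : 0 < ψ p := by linarith
  have hψp1 : ψ p < 1 := by linarith
  have hEab : ∀ w, w ∈ openSegment ℝ x y → w ∉ openSegment ℝ a b := fun w h1' h2' =>
    hnab ⟨hxy, hxa, hxb, hya, hyb, hab, ⟨w, h1', h2'⟩⟩
  have hEcd : ∀ w, w ∈ openSegment ℝ x y → w ∉ openSegment ℝ c d := fun w h1' h2' =>
    hncd ⟨hxy, hxc, hxd, hyc, hyd, hcd, ⟨w, h1', h2'⟩⟩
  -- the core argument, applied to whichever endpoint is on the inner side of line ac
  have core : ∀ u v : Pt, openSegment ℝ u v = openSegment ℝ x y →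
      φ u + ψ u < 1 → u ∉ convexHull ℝ ({a, b, c, d} : Set Pt) → False := by
    intro u v huvxy hchiu huh
    have hpuv : p ∈ openSegment ℝ u v := by rw [huvxy]; exact hpxy
    have hpuv' := hpuv
    rw [openSegment_eq_image] at hpuv'
    obtain ⟨θ, ⟨hθ0, hθ1⟩, hpθ⟩ := hpuv'
    have hpθ' : (1 - θ) • u + θ • v = p := hpθ
    -- a generic construction: points on the half-open segment (p, u] lie on open xy
    have hseg : ∀ τ : ℝ, 0 < τ → τ < 1 → (1 - τ) • p + τ • u ∈ openSegment ℝ x y := by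
      intro τ hτ0 hτ1
      rw [← huvxy, openSegment_eq_image]
      refine ⟨(1 - τ) * θ, ⟨by nlinarith, by nlinarith⟩, ?_⟩
      show (1 - (1 - τ) * θ) • u + ((1 - τ) * θ) • v = (1 - τ) • p + τ • u
      rw [← hpθ']
      module
    -- Step A : 0 ≤ φ u
    have hφu : 0 ≤ φ u := by
      by_contra hφu
      push_neg at hφu
      have hden : 0 < φ p - φ u := by linarith
      set τ := φ p / (φ p - φ u) with hτdef
      have hτ0 : 0 < τ := div_pos hφp0 hden
      have hτ1 : τ < 1 := (div_lt_one hden).2 (by linarith)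
      have hτeq : τ * (φ p - φ u) = φ p := by rw [hτdef]; exact div_mul_cancel₀ _ hden.ne'
      have hφw : φ ((1 - τ) • p + τ • u) = 0 := by
        rw [φaff (1 - τ) τ p u (by ring)]; linear_combination -hτeq
      have hψw : ψ ((1 - τ) • p + τ • u) = (1 - τ) * ψ p + τ * ψ u :=
        ψaff (1 - τ) τ p u (by ring)
      have hwxy := hseg τ hτ0 hτ1
      have hχw : ψ ((1 - τ) • p + τ • u) < 1 := by
        rw [hψw]
        nlinarith [mul_lt_mul_of_pos_left hchiu hτ0, hφw,
          φaff (1 - τ) τ p u (by ring : (1 - τ) + τ = (1:ℝ)),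
          (by rw [hχp] : (1 - τ) * (φ p + ψ p) = (1 - τ) * 1)]
      rcases le_or_gt (ψ ((1 - τ) • p + τ • u)) (ψ b) with hle | hgt
      · -- the segment must first cross cd : contradiction
        have hψw0 : ψ ((1 - τ) • p + τ • u) < 0 := by linarith
        have hdenσ : 0 < ψ p - ψ ((1 - τ) • p + τ • u) := by linarith
        set w := (1 - τ) • p + τ • u with hwdef
        set σ := ψ p / (ψ p - ψ w) with hσdef
        have hσ0 : 0 < σ := div_pos hψp0 hdenσ
        have hσ1 : σ < 1 := (div_lt_one hdenσ).2 (by linarith)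
        have hσeq : σ * (ψ p - ψ w) = ψ p := by rw [hσdef]; exact div_mul_cancel₀ _ hdenσ.ne'
        have hψz : ψ ((1 - σ) • p + σ • w) = 0 := by
          rw [ψaff (1 - σ) σ p w (by ring)]; linear_combination -hσeq
        have hφz : φ ((1 - σ) • p + σ • w) = (1 - σ) * φ p := by
          rw [φaff (1 - σ) σ p w (by ring), hφw]; ring
        have hzcd : ((1 - σ) • p + σ • w) ∈ openSegment ℝ c d := by
          refine memCD _ hψz ?_ ?_ <;> rw [hφz] <;> nlinarith
        have hzxy : ((1 - σ) • p + σ • w) ∈ openSegment ℝ x y := by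
          have hx' : p ∈ openSegment ℝ x y := by rw [← huvxy]; exact hpuv
          exact (convex_openSegment x y) hx' hwxy (by linarith) hσ0.le (by ring)
        exact hEcd _ hzxy hzcd
      · exact hEab _ hwxy (memAB _ hφw hgt hχw)
    -- Step B : 0 ≤ ψ u
    have hψu : 0 ≤ ψ u := by
      by_contra hψu
      push_neg at hψu
      have hden : 0 < ψ p - ψ u := by linarith
      set τ := ψ p / (ψ p - ψ u) with hτdef
      have hτ0 : 0 < τ := div_pos hψp0 hden
      have hτ1 : τ < 1 := (div_lt_one hden).2 (by linarith)
      have hτeq : τ * (ψ p - ψ u) = ψ p := by rw [hτdef]; exact div_mul_cancel₀ _ hden.ne'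
      have hψw : ψ ((1 - τ) • p + τ • u) = 0 := by
        rw [ψaff (1 - τ) τ p u (by ring)]; linear_combination -hτeq
      have hφw : φ ((1 - τ) • p + τ • u) = (1 - τ) * φ p + τ * φ u :=
        φaff (1 - τ) τ p u (by ring)
      have hwxy := hseg τ hτ0 hτ1
      have hχw : φ ((1 - τ) • p + τ • u) < 1 := by
        rw [hφw]
        nlinarith [mul_lt_mul_of_pos_left hchiu hτ0, hψw,
          ψaff (1 - τ) τ p u (by ring : (1 - τ) + τ = (1:ℝ)),
          (by rw [hχp] : (1 - τ) * (φ p + ψ p) = (1 - τ) * 1)]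
      rcases le_or_gt (φ ((1 - τ) • p + τ • u)) (φ d) with hle | hgt
      · have hφw0 : φ ((1 - τ) • p + τ • u) < 0 := by linarith
        have hdenσ : 0 < φ p - φ ((1 - τ) • p + τ • u) := by linarith
        set w := (1 - τ) • p + τ • u with hwdef
        set σ := φ p / (φ p - φ w) with hσdef
        have hσ0 : 0 < σ := div_pos hφp0 hdenσ
        have hσ1 : σ < 1 := (div_lt_one hdenσ).2 (by linarith)
        have hσeq : σ * (φ p - φ w) = φ p := by rw [hσdef]; exact div_mul_cancel₀ _ hdenσ.ne'
        have hφz : φ ((1 - σ) • p + σ • w) = 0 := by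
          rw [φaff (1 - σ) σ p w (by ring)]; linear_combination -hσeq
        have hψz : ψ ((1 - σ) • p + σ • w) = (1 - σ) * ψ p := by
          rw [ψaff (1 - σ) σ p w (by ring), hψw]; ring
        have hzab : ((1 - σ) • p + σ • w) ∈ openSegment ℝ a b := by
          refine memAB _ hφz ?_ ?_ <;> rw [hψz] <;> nlinarith
        have hzxy : ((1 - σ) • p + σ • w) ∈ openSegment ℝ x y := by
          have hx' : p ∈ openSegment ℝ x y := by rw [← huvxy]; exact hpuv
          exact (convex_openSegment x y) hx' hwxy (by linarith) hσ0.le (by ring)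
        exact hEab _ hzxy hzab
      · exact hEcd _ hwxy (memCD _ hψw hgt hχw)
    -- Step C : u lies in the convex hull, contradiction
    have hγ : 0 < 1 - φ u - ψ u := by linarith
    have hu_eq : u = (ψ u) • a + (φ u) • c + (1 - φ u - ψ u) • e₀ := by
      apply keyInj
      · rw [φaff3 (ψ u) (φ u) (1 - φ u - ψ u) a c e₀ (by ring), φa, φc, φe]; ring
      · rw [ψaff3 (ψ u) (φ u) (1 - φ u - ψ u) a c e₀ (by ring), ψa, ψc, ψe]; ring
    have haH : a ∈ convexHull ℝ ({a, b, c, d} : Set Pt) := subset_convexHull ℝ _ (by simp)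
    have hbH : b ∈ convexHull ℝ ({a, b, c, d} : Set Pt) := subset_convexHull ℝ _ (by simp)
    have hcH : c ∈ convexHull ℝ ({a, b, c, d} : Set Pt) := subset_convexHull ℝ _ (by simp)
    have heH : e₀ ∈ convexHull ℝ ({a, b, c, d} : Set Pt) :=
      (convex_convexHull ℝ _).segment_subset haH hbH (openSegment_subset_segment ℝ a b he₀ab)
    have hs1 : 0 < φ u + (1 - φ u - ψ u) := by linarith
    have hz1H : (φ u / (φ u + (1 - φ u - ψ u))) • c +
        ((1 - φ u - ψ u) / (φ u + (1 - φ u - ψ u))) • e₀ ∈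
        convexHull ℝ ({a, b, c, d} : Set Pt) :=
      (convex_convexHull ℝ _) hcH heH (div_nonneg hφu hs1.le) (div_nonneg hγ.le hs1.le)
        (by field_simp)
    have huH : u ∈ convexHull ℝ ({a, b, c, d} : Set Pt) := by
      have h2 := (convex_convexHull ℝ _) haH hz1H hψu hs1.le (by ring)
      have h3 : (ψ u) • a + (φ u + (1 - φ u - ψ u)) •
          ((φ u / (φ u + (1 - φ u - ψ u))) • c +
           ((1 - φ u - ψ u) / (φ u + (1 - φ u - ψ u))) • e₀) = u := by
        rw [smul_add, smul_smul, smul_smul, mul_div_cancel₀ _ hs1.ne', mul_div_cancel₀ _ hs1.ne']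
        conv_rhs => rw [hu_eq]
        module
      rwa [h3] at h2
    exact huh huH
  -- apply the core to x or to y
  have hχx : φ x + ψ x ≠ 1 := fun h => nacx (hchi x h)
  have hχy : φ y + ψ y ≠ 1 := fun h => nacy (hchi y h)
  have hpxy' := hpxy
  rw [openSegment_eq_image] at hpxy'
  obtain ⟨θ, ⟨hθ0, hθ1⟩, hpθ⟩ := hpxy'
  have hpθ' : (1 - θ) • x + θ • y = p := hpθ
  have hφp : φ p = (1 - θ) * φ x + θ * φ y := by rw [← hpθ']; exact φaff _ _ _ _ (by ring)
  have hψp : ψ p = (1 - θ) * ψ x + θ * ψ y := by rw [← hpθ']; exact ψaff _ _ _ _ (by ring)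
  rcases lt_or_gt_of_ne hχx with hx1 | hx1
  · exact core x y rfl hx1 hxhull
  · have hy1 : φ y + ψ y < 1 := by nlinarith
    exact core y x (openSeg_comm y x) hy1 hyhull

end Key2
lemma EdgeCross.symm {e f : Sym2 Pt} (h : EdgeCross e f) : EdgeCross f e := by
  obtain ⟨a, b, c, d, h1, h2, h⟩ := h
  exact ⟨c, d, a, b, h2, h1, h.comm⟩

/-- The set of crossing pairs. -/
def crossPairs (M : Set (Sym2 Pt)) : Set (Sym2 (Sym2 Pt)) :=
  {z | ∃ e f, z = s(e, f) ∧ e ∈ M ∧ f ∈ M ∧ EdgeCross e f}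

lemma crossNum_eq (M : Set (Sym2 Pt)) : crossNum M = (crossPairs M).ncard := rfl

/-- The set of edges of `O` crossing a fixed edge `g`. -/
def SEdges (O : Set (Sym2 Pt)) (g : Sym2 Pt) : Set (Sym2 Pt) :=
  {e | e ∈ O ∧ EdgeCross e g}

/-- Crossing pairs consisting of an edge of `O` and the fixed edge `g`. -/
def EEdges (O : Set (Sym2 Pt)) (g : Sym2 Pt) : Set (Sym2 (Sym2 Pt)) :=
  (fun e => s(e, g)) '' SEdges O g

lemma SEdges_finite {O : Set (Sym2 Pt)} (h : O.Finite) (g : Sym2 Pt) : (SEdges O g).Finite :=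
  h.subset fun _ he => he.1

lemma EEdges_finite {O : Set (Sym2 Pt)} (h : O.Finite) (g : Sym2 Pt) : (EEdges O g).Finite :=
  (SEdges_finite h g).image _

lemma EEdges_ncard {O : Set (Sym2 Pt)} (g : Sym2 Pt) (hg : g ∉ O) :
    (EEdges O g).ncard = (SEdges O g).ncard := by
  apply Set.ncard_image_of_injOn
  intro e1 h1 e2 h2 he
  rcases Sym2.eq_iff.1 he with ⟨h, -⟩ | ⟨h, h'⟩
  · exact h
  · exact absurd (h ▸ h1.1 : g ∈ O) (h' ▸ hg)

lemma crossPairs_subset_image (M : Set (Sym2 Pt)) :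
    crossPairs M ⊆ (fun q : Sym2 Pt × Sym2 Pt => s(q.1, q.2)) '' (M ×ˢ M) := by
  rintro z ⟨e, f, rfl, he, hf, -⟩
  exact ⟨(e, f), ⟨he, hf⟩, rfl⟩

lemma crossPairs_finite {M : Set (Sym2 Pt)} (h : M.Finite) : (crossPairs M).Finite :=
  ((h.prod h).image _).subset (crossPairs_subset_image M)

lemma mem_sym2_of_mem_crossPairsO {O : Set (Sym2 Pt)} {z : Sym2 (Sym2 Pt)}
    (hz : z ∈ crossPairs O) : ∀ g ∈ z, g ∈ O := by
  obtain ⟨e, f, rfl, he, hf, -⟩ := hz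
  intro g hg
  rcases Sym2.mem_iff.1 hg with rfl | rfl <;> assumption
set_option maxHeartbeats 2000000 in
lemma flip_lt {P : Finset Pt} (hgp : GenPos ↑P) (hcv : ConvexPos ↑P)
    {M : Set (Sym2 Pt)} (hM : IsPM P M) {a b c d : Pt}
    (habM : s(a, b) ∈ M) (hcdM : s(c, d) ∈ M) (hX : SegCross a b c d) :
    crossNum ((M \ {s(a, b), s(c, d)}) ∪ {s(a, c), s(b, d)}) < crossNum M := by
  classical
  obtain ⟨hnd, hpts, huniq⟩ := hM
  obtain ⟨hab, hac, had, hbc, hbd, hcd, -⟩ := id hX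
  have haP : a ∈ P := hpts _ habM a (Sym2.mem_mk_left a b)
  have hbP : b ∈ P := hpts _ habM b (Sym2.mem_mk_right a b)
  have hcP : c ∈ P := hpts _ hcdM c (Sym2.mem_mk_left c d)
  have hdP : d ∈ P := hpts _ hcdM d (Sym2.mem_mk_right c d)
  have uniq : ∀ e ∈ M, ∀ f ∈ M, ∀ p : Pt, p ∈ e → p ∈ f → e = f := by
    intro e he f hf p hpe hpf
    exact (huniq p (hpts e he p hpe)).unique ⟨he, hpe⟩ ⟨hf, hpf⟩
  set O : Set (Sym2 Pt) := M \ {s(a, b), s(c, d)} with hO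
  have hOM : O ⊆ M := Set.diff_subset
  have habO : s(a, b) ∉ O := fun h => h.2 (by simp)
  have hcdO : s(c, d) ∉ O := fun h => h.2 (by simp)
  have hacM : s(a, c) ∉ M := by
    intro h
    rcases Sym2.eq_iff.1 (uniq _ habM _ h a (Sym2.mem_mk_left a b) (Sym2.mem_mk_left a c)) with
      ⟨-, h2⟩ | ⟨h1, -⟩
    · exact hbc h2
    · exact hac h1
  have hbdM : s(b, d) ∉ M := by
    intro h
    rcases Sym2.eq_iff.1 (uniq _ habM _ h b (Sym2.mem_mk_right a b) (Sym2.mem_mk_left b d)) with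
      ⟨h1, -⟩ | ⟨h1, -⟩
    · exact hab h1
    · exact had h1
  have hacO : s(a, c) ∉ O := fun h => hacM (hOM h)
  have hbdO : s(b, d) ∉ O := fun h => hbdM (hOM h)
  have hOpt : ∀ e ∈ O, ∀ p ∈ e, p ≠ a ∧ p ≠ b ∧ p ≠ c ∧ p ≠ d := by
    intro e heO p hpe
    refine ⟨?_, ?_, ?_, ?_⟩ <;> rintro rfl
    · exact habO ((uniq _ (hOM heO) _ habM _ hpe (Sym2.mem_mk_left p b)) ▸ heO)
    · exact habO ((uniq _ (hOM heO) _ habM _ hpe (Sym2.mem_mk_right a p)) ▸ heO)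
    · exact hcdO ((uniq _ (hOM heO) _ hcdM _ hpe (Sym2.mem_mk_left p d)) ▸ heO)
    · exact hcdO ((uniq _ (hOM heO) _ hcdM _ hpe (Sym2.mem_mk_right c p)) ▸ heO)
  have hMfin : M.Finite := by
    have hsub : M ⊆ (fun q : Pt × Pt => s(q.1, q.2)) '' ((↑P : Set Pt) ×ˢ (↑P : Set Pt)) := by
      intro e he
      induction e using Sym2.ind with
      | _ u v =>
        exact ⟨(u, v), ⟨hpts _ he u (Sym2.mem_mk_left u v), hpts _ he v (Sym2.mem_mk_right u v)⟩,
          rfl⟩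
    exact (((P.finite_toSet).prod (P.finite_toSet)).image _).subset hsub
  have hOfin : O.Finite := hMfin.subset hOM
  have hM'fin : (O ∪ {s(a, c), s(b, d)}).Finite :=
    (hMfin.subset hOM).union ((Set.finite_singleton _).insert _)
  have hPOfin : (crossPairs O).Finite := crossPairs_finite hOfin
  -- noncollinearity of the quadrilateral
  have nabc : ¬ Collinear ℝ ({a, b, c} : Set Pt) := hgp a haP b hbP c hcP hab hac hbc
  have nabd : ¬ Collinear ℝ ({a, b, d} : Set Pt) := hgp a haP b hbP d hdP hab had hbd
  have ncda : ¬ Collinear ℝ ({c, d, a} : Set Pt) :=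
    hgp c hcP d hdP a haP hcd hac.symm had.symm
  have ncdb : ¬ Collinear ℝ ({c, d, b} : Set Pt) :=
    hgp c hcP d hdP b hbP hcd hbc.symm hbd.symm
  -- relabelled versions (b a d c)
  have nbad : ¬ Collinear ℝ ({b, a, d} : Set Pt) := hgp b hbP a haP d hdP hab.symm hbd had
  have nbac : ¬ Collinear ℝ ({b, a, c} : Set Pt) := hgp b hbP a haP c hcP hab.symm hbc hac
  have ndcb : ¬ Collinear ℝ ({d, c, b} : Set Pt) :=
    hgp d hdP c hcP b hbP hcd.symm hbd.symm hbc.symm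
  have ndca : ¬ Collinear ℝ ({d, c, a} : Set Pt) :=
    hgp d hdP c hcP a haP hcd.symm had.symm hac.symm
  have hX' : SegCross b a d c := hX.swapL.swapR
  have hsetq : ({b, a, d, c} : Set Pt) = ({a, b, c, d} : Set Pt) := by
    ext w; simp only [Set.mem_insert_iff, Set.mem_singleton_iff]; tauto
  -- hull avoidance for points of P outside {a,b,c,d}
  have hhull : ∀ w : Pt, w ∈ P → w ≠ a → w ≠ b → w ≠ c → w ≠ d →
      w ∉ convexHull ℝ ({a, b, c, d} : Set Pt) := by
    intro w hwP hwa hwb hwc hwd hmem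
    apply hcv w hwP
    refine convexHull_mono ?_ hmem
    intro z hz
    simp only [Set.mem_insert_iff, Set.mem_singleton_iff] at hz
    rcases hz with rfl | rfl | rfl | rfl
    · exact ⟨haP, fun h => hwa (by simpa using h.symm)⟩
    · exact ⟨hbP, fun h => hwb (by simpa using h.symm)⟩
    · exact ⟨hcP, fun h => hwc (by simpa using h.symm)⟩
    · exact ⟨hdP, fun h => hwd (by simpa using h.symm)⟩
  -- upper bound for the new matching
  have hnotacbd : ¬ EdgeCross (s(a, c)) (s(b, d)) := fun h =>
    L1 hX nabc nabd ncda ncdb (edgeCross_iff.1 h)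
  have hsub1 : crossPairs (O ∪ {s(a, c), s(b, d)}) ⊆
      crossPairs O ∪ (EEdges O (s(a, c)) ∪ EEdges O (s(b, d))) := by
    rintro z ⟨e, f, rfl, he, hf, hcross⟩
    have hmem : ∀ g, g ∈ (M \ {s(a, b), s(c, d)}) ∪ {s(a, c), s(b, d)} →
        g ∈ O ∨ g = s(a, c) ∨ g = s(b, d) := by
      intro g hg
      rcases hg with hg | hg
      · exact Or.inl hg
      · right; simpa using hg
    rcases hmem e he with heO | rfl | rfl <;> rcases hmem f hf with hfO | rfl | rfl
    · exact Or.inl ⟨e, f, rfl, heO, hfO, hcross⟩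
    · exact Or.inr (Or.inl ⟨e, ⟨heO, hcross⟩, rfl⟩)
    · exact Or.inr (Or.inr ⟨e, ⟨heO, hcross⟩, rfl⟩)
    · exact Or.inr (Or.inl ⟨f, ⟨hfO, hcross.symm⟩, Sym2.eq_swap⟩)
    · exact absurd hcross (not_edgeCross_self _)
    · exact absurd hcross hnotacbd
    · exact Or.inr (Or.inr ⟨f, ⟨hfO, hcross.symm⟩, Sym2.eq_swap⟩)
    · exact absurd hcross.symm hnotacbd
    · exact absurd hcross (not_edgeCross_self _)
  -- the per-edge counting inequality
  have key : (SEdges O (s(a, c))).ncard + (SEdges O (s(b, d))).ncard ≤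
      (SEdges O (s(a, b))).ncard + (SEdges O (s(c, d))).ncard := by
    have hfilter : ∀ g : Sym2 Pt, SEdges O g = ↑(hOfin.toFinset.filter (fun e => EdgeCross e g)) := by
      intro g
      ext e
      simp [SEdges, Set.Finite.mem_toFinset]
    rw [hfilter, hfilter, hfilter, hfilter, Set.ncard_coe_finset, Set.ncard_coe_finset,
      Set.ncard_coe_finset, Set.ncard_coe_finset, Finset.card_filter, Finset.card_filter,
      Finset.card_filter, Finset.card_filter, ← Finset.sum_add_distrib, ← Finset.sum_add_distrib]
    apply Finset.sum_le_sum
    intro e heOF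
    have heO : e ∈ O := (Set.Finite.mem_toFinset hOfin).1 heOF
    induction e using Sym2.ind with
    | _ u v =>
    have huv : u ≠ v := by
      have := hnd _ (hOM heO)
      rwa [Sym2.mk_isDiag_iff] at this
    have huP : u ∈ P := hpts _ (hOM heO) u (Sym2.mem_mk_left u v)
    have hvP : v ∈ P := hpts _ (hOM heO) v (Sym2.mem_mk_right u v)
    obtain ⟨hua, hub, huc, hud⟩ := hOpt _ heO u (Sym2.mem_mk_left u v)
    obtain ⟨hva, hvb, hvc, hvd⟩ := hOpt _ heO v (Sym2.mem_mk_right u v)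
    have huhull := hhull u huP hua hub huc hud
    have hvhull := hhull v hvP hva hvb hvc hvd
    have huhull' : u ∉ convexHull ℝ ({b, a, d, c} : Set Pt) := by rwa [hsetq]
    have hvhull' : v ∉ convexHull ℝ ({b, a, d, c} : Set Pt) := by rwa [hsetq]
    have nacu : ¬ Collinear ℝ ({a, c, u} : Set Pt) := hgp a haP c hcP u huP hac hua.symm huc.symm
    have nacv : ¬ Collinear ℝ ({a, c, v} : Set Pt) := hgp a haP c hcP v hvP hac hva.symm hvc.symm
    have nbdu : ¬ Collinear ℝ ({b, d, u} : Set Pt) := hgp b hbP d hdP u huP hbd hub.symm hud.symm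
    have nbdv : ¬ Collinear ℝ ({b, d, v} : Set Pt) := hgp b hbP d hdP v hvP hbd hvb.symm hvd.symm
    by_cases h1 : EdgeCross (s(u, v)) (s(a, c)) <;> by_cases h2 : EdgeCross (s(u, v)) (s(b, d))
    · obtain ⟨hA1, hA2⟩ := K1 hX nabc nabd ncda ncdb (edgeCross_iff.1 h1) (edgeCross_iff.1 h2)
      have h3 : EdgeCross (s(u, v)) (s(a, b)) := edgeCross_iff.2 hA1
      have h4 : EdgeCross (s(u, v)) (s(c, d)) := edgeCross_iff.2 hA2
      simp [h1, h2, h3, h4]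
    · rcases K2 hX nabc nabd ncda ncdb nacu nacv huhull hvhull hub hud hvb hvd
        (edgeCross_iff.1 h1) with hA | hA
      · have h3 : EdgeCross (s(u, v)) (s(a, b)) := edgeCross_iff.2 hA
        simp only [h1, h2, h3, if_true, if_false]
        split_ifs <;> omega
      · have h4 : EdgeCross (s(u, v)) (s(c, d)) := edgeCross_iff.2 hA
        simp only [h1, h2, h4, if_true, if_false]
        split_ifs <;> omega
    · rcases K2 hX' nbad nbac ndcb ndca nbdu nbdv huhull' hvhull' hua huc hva hvc
        (edgeCross_iff.1 h2) with hA | hA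
      · have h3 : EdgeCross (s(u, v)) (s(a, b)) := edgeCross_iff.2 hA.swapR
        simp only [h1, h2, h3, if_true, if_false]
        split_ifs <;> omega
      · have h4 : EdgeCross (s(u, v)) (s(c, d)) := edgeCross_iff.2 hA.swapR
        simp only [h1, h2, h4, if_true, if_false]
        split_ifs <;> omega
    · simp [h1, h2]
  -- decomposition of the old crossing set
  set z₀ : Sym2 (Sym2 Pt) := s(s(a, b), s(c, d)) with hz₀
  have habcd : s(a, b) ≠ s(c, d) := by
    intro h
    rcases Sym2.eq_iff.1 h with ⟨h1, -⟩ | ⟨h1, -⟩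
    · exact hac h1
    · exact had h1
  have hsub2 : crossPairs O ∪ (EEdges O (s(a, b)) ∪ (EEdges O (s(c, d)) ∪ {z₀})) ⊆
      crossPairs M := by
    rintro z (hz | hz | hz | hz)
    · obtain ⟨e, f, rfl, he, hf, hc'⟩ := hz
      exact ⟨e, f, rfl, hOM he, hOM hf, hc'⟩
    · obtain ⟨e, ⟨heO, hc'⟩, rfl⟩ := hz
      exact ⟨e, s(a, b), rfl, hOM heO, habM, hc'⟩
    · obtain ⟨e, ⟨heO, hc'⟩, rfl⟩ := hz
      exact ⟨e, s(c, d), rfl, hOM heO, hcdM, hc'⟩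
    · rw [Set.mem_singleton_iff] at hz
      subst hz
      exact ⟨s(a, b), s(c, d), rfl, habM, hcdM, edgeCross_iff.2 hX⟩
  have hd3 : Disjoint (EEdges O (s(c, d))) ({z₀} : Set (Sym2 (Sym2 Pt))) := by
    rw [Set.disjoint_right]
    rintro z rfl
    rintro ⟨e, ⟨heO, -⟩, hz⟩
    rcases Sym2.eq_iff.1 hz with ⟨h1, -⟩ | ⟨-, h2⟩
    · exact habO (h1 ▸ heO)
    · exact habcd h2.symm
  have hd2 : Disjoint (EEdges O (s(a, b))) (EEdges O (s(c, d)) ∪ {z₀}) := by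
    rw [Set.disjoint_left]
    rintro z ⟨e, ⟨heO, -⟩, rfl⟩ (hz | hz)
    · obtain ⟨f, ⟨hfO, -⟩, hz'⟩ := hz
      rcases Sym2.eq_iff.1 hz' with ⟨-, h2⟩ | ⟨h1, h2⟩
      · exact habcd h2.symm
      · exact hcdO (h2.symm ▸ heO)
    · rw [Set.mem_singleton_iff] at hz
      rcases Sym2.eq_iff.1 hz with ⟨h1, -⟩ | ⟨h1, -⟩
      · exact habO (h1 ▸ heO)
      · exact hcdO (h1 ▸ heO)
  have hd1 : Disjoint (crossPairs O) (EEdges O (s(a, b)) ∪ (EEdges O (s(c, d)) ∪ {z₀})) := by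
    rw [Set.disjoint_left]
    rintro z hzPO (hz | hz | hz)
    · obtain ⟨e, -, rfl⟩ := hz
      exact habO (mem_sym2_of_mem_crossPairsO hzPO _ (Sym2.mem_mk_right e (s(a, b))))
    · obtain ⟨e, -, rfl⟩ := hz
      exact hcdO (mem_sym2_of_mem_crossPairsO hzPO _ (Sym2.mem_mk_right e (s(c, d))))
    · rw [Set.mem_singleton_iff] at hz
      subst hz
      exact habO (mem_sym2_of_mem_crossPairsO hzPO _ (Sym2.mem_mk_left (s(a, b)) (s(c, d))))
  have hAfin : (crossPairs M).Finite := crossPairs_finite hMfin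
  -- final arithmetic
  have hub : crossNum (O ∪ {s(a, c), s(b, d)}) ≤
      (crossPairs O).ncard + ((SEdges O (s(a, c))).ncard + (SEdges O (s(b, d))).ncard) := by
    rw [crossNum_eq]
    calc (crossPairs (O ∪ {s(a, c), s(b, d)})).ncard
        ≤ (crossPairs O ∪ (EEdges O (s(a, c)) ∪ EEdges O (s(b, d)))).ncard :=
          Set.ncard_le_ncard hsub1
            ((hPOfin.union ((EEdges_finite hOfin _).union (EEdges_finite hOfin _))))
      _ ≤ (crossPairs O).ncard + (EEdges O (s(a, c)) ∪ EEdges O (s(b, d))).ncard :=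
          Set.ncard_union_le _ _
      _ ≤ (crossPairs O).ncard + ((EEdges O (s(a, c))).ncard + (EEdges O (s(b, d))).ncard) := by
          have := Set.ncard_union_le (EEdges O (s(a, c))) (EEdges O (s(b, d)))
          omega
      _ = (crossPairs O).ncard + ((SEdges O (s(a, c))).ncard + (SEdges O (s(b, d))).ncard) := by
          rw [EEdges_ncard _ hacO, EEdges_ncard _ hbdO]
  have hlb : (crossPairs O).ncard + ((SEdges O (s(a, b))).ncard + (SEdges O (s(c, d))).ncard) + 1 ≤
      crossNum M := by
    rw [crossNum_eq]
    have e1 : (crossPairs O ∪ (EEdges O (s(a, b)) ∪ (EEdges O (s(c, d)) ∪ {z₀}))).ncard =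
        (crossPairs O).ncard + ((SEdges O (s(a, b))).ncard + ((SEdges O (s(c, d))).ncard + 1)) := by
      rw [Set.ncard_union_eq hd1 hPOfin
          ((EEdges_finite hOfin _).union ((EEdges_finite hOfin _).union (Set.finite_singleton _))),
        Set.ncard_union_eq hd2 (EEdges_finite hOfin _)
          ((EEdges_finite hOfin _).union (Set.finite_singleton _)),
        Set.ncard_union_eq hd3 (EEdges_finite hOfin _) (Set.finite_singleton _),
        Set.ncard_singleton, EEdges_ncard _ habO, EEdges_ncard _ hcdO]
    have e2 := Set.ncard_le_ncard hsub2 hAfin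
    omega
  omega

/-- On points in convex (and general) position, a single flip strictly
decreases the number of crossing pairs of edges. -/
theorem stmt8 (n : ℕ) (hn : Even n) (P : Finset Pt) (hcard : P.card = n)
    (hgp : GenPos ↑P) (hcv : ConvexPos ↑P)
    (M M' : Set (Sym2 Pt)) (hM : IsPM P M) (hflip : Flip M M') :
    crossNum M' < crossNum M := by
  obtain ⟨a, b, c, d, habM, hcdM, hX, hM'⟩ := hflip
  rcases hM' with rfl | rfl
  · exact flip_lt hgp hcv hM habM hcdM hX
  · have hcd' : s(d, c) ∈ M := by rwa [Sym2.eq_swap]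
    have h := flip_lt hgp hcv hM habM hcd' hX.swapR
    rwa [show (s(d, c) : Sym2 Pt) = s(c, d) from Sym2.eq_swap] at h
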